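/- Let f be the standard normal density. For all real x₁, x₂: (f(x₁)−f(x₂))² + (1/4)[(x₁f(x₁)−x₂f(x₂))² − (√(x₁²+4)·f(x₁) + √(x₂²+4)·f(x₂))²] < 0. -/

import Mathlib

/-! Writing `s = √(x₁² + 4)`, `t = √(x₂² + 4)`, the quantity equals
`-(2 + (x₁x₂ + st)/2) f(x₁) f(x₂)`, and `st > |x₁||x₂| ≥ -x₁x₂`. -/

open Real MeasureTheory Set

noncomputable def stdNormalPdf (x : ℝ) : ℝ := (Real.sqrt (2 * Real.pi))⁻¹ * Real.exp (-x ^ 2 / 2)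

noncomputable def gaussQ (x : ℝ) : ℝ := ∫ t in Set.Ici x, stdNormalPdf t

noncomputable def gaussPhi (x : ℝ) : ℝ := ∫ t in Set.Iic x, stdNormalPdf t

lemma stdNormalPdf_pos (x : ℝ) : 0 < stdNormalPdf x := by
  unfold stdNormalPdf
  positivity

lemma abs_lt_sqrt_sq_add {x c : ℝ} (hc : 0 < c) : |x| < √(x ^ 2 + c) := by
  rw [← sqrt_sq_eq_abs]
  exact sqrt_lt_sqrt (sq_nonneg x) (by linarith)

lemma mul_add_sqrt_mul_sqrt_pos {x y c : ℝ} (hc : 0 < c) :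
    0 < x * y + √(x ^ 2 + c) * √(y ^ 2 + c) := by
  have hxy : |x| * |y| < √(x ^ 2 + c) * √(y ^ 2 + c) :=
    mul_lt_mul'' (abs_lt_sqrt_sq_add hc) (abs_lt_sqrt_sq_add hc) (abs_nonneg x) (abs_nonneg y)
  have : -(x * y) ≤ |x| * |y| := by
    rw [← abs_mul]
    exact neg_le_abs _
  linarith

lemma sq_sub_add_quarter_mul_eq {a b x y s t : ℝ} (hs : s ^ 2 = x ^ 2 + 4)
    (ht : t ^ 2 = y ^ 2 + 4) :
    (a - b) ^ 2 + (1 / 4) * ((x * a - y * b) ^ 2 - (s * a + t * b) ^ 2)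
      = -(2 + (x * y + s * t) / 2) * (a * b) := by
  linear_combination (-(a ^ 2) / 4) * hs + (-(b ^ 2) / 4) * ht

theorem stmt8 (x₁ x₂ : ℝ) :
    (stdNormalPdf x₁ - stdNormalPdf x₂) ^ 2
      + (1 / 4) * ((x₁ * stdNormalPdf x₁ - x₂ * stdNormalPdf x₂) ^ 2
        - (Real.sqrt (x₁ ^ 2 + 4) * stdNormalPdf x₁
            + Real.sqrt (x₂ ^ 2 + 4) * stdNormalPdf x₂) ^ 2) < 0 := by
  rw [sq_sub_add_quarter_mul_eq (sq_sqrt (by positivity)) (sq_sqrt (by positivity))]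
  have hcross := mul_add_sqrt_mul_sqrt_pos (x := x₁) (y := x₂) (c := 4) four_pos
  have hpdf := mul_pos (stdNormalPdf_pos x₁) (stdNormalPdf_pos x₂)
  exact mul_neg_of_neg_of_pos (by linarith) hpdf
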